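/- For a connected simple graph G, every vertex v_i satisfies RE_G(v_i) ≤ (1/2)( (1/d_i) Σ_{j~i} 1/d_j + 1 ). -/

import Mathlib

open Matrix BigOperators Finset
open scoped Classical

/-- `M * Mᴴ` is positive semidefinite. -/
theorem mulConjTranspose_posSemidef {V : Type*} [Fintype V] [DecidableEq V]
    (M : Matrix V V ℝ) : (M * Mᴴ).PosSemidef := by
  simpa using Matrix.posSemidef_conjTranspose_mul_self Mᴴ

/-- The absolute value `|M| = (M M*)^(1/2)` of a matrix. -/
noncomputable def matAbs {V : Type*} [Fintype V] [DecidableEq V]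
    (M : Matrix V V ℝ) : Matrix V V ℝ :=
  (mulConjTranspose_posSemidef M).1.eigenvectorUnitary.1 *
    diagonal (RCLike.ofReal ∘ Real.sqrt ∘ (mulConjTranspose_posSemidef M).1.eigenvalues) *
    (star (mulConjTranspose_posSemidef M).1.eigenvectorUnitary : Matrix V V ℝ)

/-- The Randić matrix of a simple graph. -/
noncomputable def randicMatrix {V : Type*} [Fintype V] [DecidableEq V]
    (G : SimpleGraph V) : Matrix V V ℝ :=
  Matrix.of fun i j =>
    if G.Adj i j then 1 / Real.sqrt ((G.degree i : ℝ) * (G.degree j : ℝ)) else 0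

/-- The Randić energy of a vertex: `RE_G(v) = |R(G)|_{vv}`. -/
noncomputable def vertexRE {V : Type*} [Fintype V] [DecidableEq V]
    (G : SimpleGraph V) (i : V) : ℝ :=
  matAbs (randicMatrix G) i i

lemma diag_nonneg_of_posSemidef {V : Type*} [Fintype V] [DecidableEq V]
    {M : Matrix V V ℝ} (h : M.PosSemidef) (i : V) : 0 ≤ M i i := by
  exact h.diag_nonneg

/-- RE_G(v_i) ≤ (1/2)((1/d_i) Σ_{j~i} 1/d_j + 1). -/
theorem randic_vertex_energy_le_half {n : ℕ} (G : SimpleGraph (Fin n)) (hG : G.Connected)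
    (i : Fin n) :
    vertexRE G i ≤
      (1 / 2) * ((1 / (G.degree i : ℝ)) * (∑ j ∈ G.neighborFinset i, 1 / (G.degree j : ℝ)) + 1) := by
  set R := randicMatrix G with hR
  set S := matAbs R with hSdef
  have hSpsd : S.PosSemidef := by
    have hD : (diagonal (RCLike.ofReal ∘ Real.sqrt ∘
        (mulConjTranspose_posSemidef R).1.eigenvalues) : Matrix (Fin n) (Fin n) ℝ).PosSemidef :=
      posSemidef_diagonal_iff.mpr fun j => by simp [Real.sqrt_nonneg]
    have := hD.mul_mul_conjTranspose_same
      ((mulConjTranspose_posSemidef R).1.eigenvectorUnitary : Matrix (Fin n) (Fin n) ℝ)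
    simpa [hSdef, matAbs, Unitary.coe_star, star_eq_conjTranspose] using this
  have hSsq : S * S = R * Rᴴ := by
    have hA := mulConjTranspose_posSemidef R
    have hU : (star hA.1.eigenvectorUnitary : Matrix (Fin n) (Fin n) ℝ) *
        (hA.1.eigenvectorUnitary : Matrix (Fin n) (Fin n) ℝ) = 1 :=
      Unitary.coe_star_mul_self _
    have hDD : (diagonal (RCLike.ofReal ∘ Real.sqrt ∘ hA.1.eigenvalues) :
        Matrix (Fin n) (Fin n) ℝ) * diagonal (RCLike.ofReal ∘ Real.sqrt ∘ hA.1.eigenvalues) =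
        diagonal (RCLike.ofReal ∘ hA.1.eigenvalues) := by
      rw [diagonal_mul_diagonal]
      congr 1
      funext j
      simp
      exact Real.mul_self_sqrt (hA.eigenvalues_nonneg j)
    have hspec := hA.1.spectral_theorem
    rw [Unitary.conjStarAlgAut_apply] at hspec
    calc S * S = (hA.1.eigenvectorUnitary : Matrix (Fin n) (Fin n) ℝ) *
          ((diagonal (RCLike.ofReal ∘ Real.sqrt ∘ hA.1.eigenvalues) :
          Matrix (Fin n) (Fin n) ℝ) * ((star hA.1.eigenvectorUnitary : Matrix (Fin n) (Fin n) ℝ) *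
          (hA.1.eigenvectorUnitary : Matrix (Fin n) (Fin n) ℝ)) *
          diagonal (RCLike.ofReal ∘ Real.sqrt ∘ hA.1.eigenvalues)) *
          (star hA.1.eigenvectorUnitary : Matrix (Fin n) (Fin n) ℝ) := by
            simp only [hSdef, matAbs, Matrix.mul_assoc]
      _ = R * Rᴴ := by rw [hU, Matrix.mul_one, hDD, ← hspec]
  have hSherm : Sᴴ = S := hSpsd.1
  have hP : ((1 - S) * (1 - S)).PosSemidef := by
    have := mulConjTranspose_posSemidef (1 - S)
    rwa [conjTranspose_sub, conjTranspose_one, hSherm] at this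
  have hPd : 0 ≤ ((1 - S) * (1 - S)) i i := diag_nonneg_of_posSemidef hP i
  have hexpand : (1 - S) * (1 - S) = 1 - 2 • S + R * Rᴴ := by
    rw [← hSsq]; noncomm_ring
  have hdiag : (0:ℝ) ≤ 1 - 2 * S i i + (R * Rᴴ) i i := by
    rw [hexpand] at hPd
    simpa [Matrix.add_apply, Matrix.sub_apply, Matrix.one_apply, two_smul, Matrix.smul_apply,
      two_mul] using hPd
  have hRR : (R * Rᴴ) i i =
      (1 / (G.degree i : ℝ)) * (∑ j ∈ G.neighborFinset i, 1 / (G.degree j : ℝ)) := by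
    rw [mul_apply, Finset.mul_sum]
    rw [SimpleGraph.neighborFinset_eq_filter, Finset.sum_filter]
    refine Finset.sum_congr rfl fun j _ => ?_
    by_cases h : G.Adj i j
    · have hsq : Real.sqrt ((G.degree i : ℝ) * (G.degree j : ℝ)) *
          Real.sqrt ((G.degree i : ℝ) * (G.degree j : ℝ)) = (G.degree i : ℝ) * (G.degree j : ℝ) :=
        Real.mul_self_sqrt (by positivity)
      simp only [hR, randicMatrix, Matrix.conjTranspose_apply, Matrix.of_apply, h, if_true,
        star_trivial]
      rw [div_mul_div_comm, one_mul, hsq, one_div, mul_inv, one_div, one_div]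
    · simp [hR, randicMatrix, Matrix.conjTranspose_apply, h]
  have hre : vertexRE G i = S i i := rfl
  rw [hre]
  rw [hRR] at hdiag
  linarith
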